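/- Assume σ_ℓ·τ_j ≤ σ¹_ℓ·τ⁰_j for all ℓ, j, and that for every ℓ = 1,…,n, 1 − κ ≥ ‖Σ_{j=1}^m √(w_{j,ℓ}·σ¹_ℓ·τ⁰_j/ν_ℓ)·Q_ℓ K' P_j‖² (operator norm). Then for all x ∈ X and y ∈ Y, ⟨Φx,x⟩ − 2⟨Λx,y⟩ + ⟨Ψy,y⟩ ≥ δ⟨Φx,x⟩ + ((κ−δ)/(1−δ))·⟨Ψy,y⟩. -/

import Mathlib

/-!
Everything reduces to the cross-term bound `⟪Λ x, y⟫² ≤ (1 - κ) ⟪Φ x, x⟫ ⟪Ψ y, y⟫`, from which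
the claim follows by AM-GM. With `y' = ∑_{ℓ ∈ V} σ_ℓ ψ_ℓ Q_ℓ y` one has
`⟪Λ x, y⟫ = -∑_j ⟪P_j x, P_j K'* y'⟫`, so by Cauchy-Schwarz it suffices to show
`∑_j ‖P_j K'* y'‖² / φ_j ≤ (1 - κ) ⟪Ψ y, y⟫`.
For fixed `j`, the cross term `⟪P_j K'* Q_ℓ y, P_j K'* Q_k y⟫` vanishes unless
`Q_ℓ K' P_j K'* Q_k ≠ 0`, and Young's inequality with the weights `w_{j,ℓ,k}` bounds the others,
whence `‖P_j K'* y'‖² ≤ ∑_ℓ w_{j,ℓ} σ_ℓ² ψ_ℓ² ‖P_j K'* Q_ℓ y‖²`. The step-length coupling bounds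
`σ_ℓ² ψ_ℓ² / φ_j` by `ψ_ℓ σ¹_ℓ τ⁰_j / ν_ℓ`, and for fixed `ℓ` the resulting sum over `j` is, by
orthogonality of the `P_j`, the squared norm of `M_ℓ* Q_ℓ y`, where `M_ℓ` is the operator of the
step-length condition; hence it is at most `(1 - κ) ‖Q_ℓ y‖²`.
-/

open scoped RealInnerProductSpace InnerProduct Classical
open Finset

theorem add_sub_two_mul_ge_of_sq_le {a b c δ κ : ℝ} (ha : 0 ≤ a) (hb : 0 ≤ b)
    (hδκ : δ ≤ κ) (hκ : κ < 1) (hc : c ^ 2 ≤ (1 - κ) * a * b) :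
    a - 2 * c + b ≥ δ * a + (κ - δ) / (1 - δ) * b := by
  have hδ : 0 < 1 - δ := by linarith
  have hA : 0 ≤ (1 - δ) ^ 2 * a := by positivity
  have hB : 0 ≤ (1 - κ) * b := mul_nonneg (by linarith) hb
  -- AM-GM: `2 √(AB) ≤ A + B` with `A = (1-δ)² a`, `B = (1-κ) b` and `AB ≥ ((1-δ) c)²`.
  have hsq : (2 * ((1 - δ) * c)) ^ 2 ≤ ((1 - δ) ^ 2 * a + (1 - κ) * b) ^ 2 := by
    nlinarith [sq_nonneg ((1 - δ) ^ 2 * a - (1 - κ) * b),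
      mul_le_mul_of_nonneg_left hc (sq_nonneg (1 - δ))]
  have hmain := (abs_le_of_sq_le_sq' hsq (add_nonneg hA hB)).2
  rw [ge_iff_le, ← sub_nonneg]
  have key : a - 2 * c + b - (δ * a + (κ - δ) / (1 - δ) * b)
      = ((1 - δ) ^ 2 * a + (1 - κ) * b - 2 * ((1 - δ) * c)) / (1 - δ) := by
    field_simp
    ring
  rw [key]
  exact div_nonneg (by linarith) hδ.le

theorem sq_mul_div_le_of_coupling {ν ψ σ φ τ σ₁ τ₀ η η' : ℝ} (hν : 0 < ν) (hφ : 0 < φ)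
    (hτ : 0 < τ) (hψ : 0 ≤ ψ) (hη : 0 ≤ η) (hη' : 0 < η') (hστ : 0 ≤ σ₁ * τ₀)
    (hD : ν * ψ * σ = η) (hP : φ * τ = η') (hω : η / η' ≤ 1) (hstep : σ * τ ≤ σ₁ * τ₀) :
    (σ * ψ) ^ 2 / φ ≤ ψ * σ₁ * τ₀ / ν := by
  have hηη' : η ≤ η' := (div_le_one hη').mp hω
  rw [div_le_div_iff₀ hφ hν, ← mul_le_mul_iff_of_pos_right hτ]
  calc (σ * ψ) ^ 2 * ν * τ = ψ * (σ * τ) * η := by rw [← hD]; ring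
    _ ≤ ψ * (σ₁ * τ₀) * η' := by gcongr
    _ = ψ * σ₁ * τ₀ * φ * τ := by rw [← hP]; ring

section InnerProduct

variable {E : Type*} [NormedAddCommGroup E] [InnerProductSpace ℝ E]

theorem two_mul_real_inner_le_of_mul_eq_one (u v : E) {a b : ℝ} (ha : 0 < a) (hab : a * b = 1) :
    2 * ⟪u, v⟫ ≤ a * ‖u‖ ^ 2 + b * ‖v‖ ^ 2 := by
  nlinarith [sq_nonneg (a * ‖u‖ - ‖v‖), real_inner_le_norm u v, mul_pos ha ha, sq_nonneg ‖v‖]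

theorem sq_sum_inner_le_sum_mul_sum {ι : Type*} (s : Finset ι) (p z : ι → E) {φ : ι → ℝ}
    (hφ : ∀ i ∈ s, 0 < φ i) :
    (∑ i ∈ s, ⟪p i, z i⟫) ^ 2 ≤ (∑ i ∈ s, φ i * ‖p i‖ ^ 2) * ∑ i ∈ s, ‖z i‖ ^ 2 / φ i := by
  refine sum_sq_le_sum_mul_sum_of_sq_le_mul s (fun i hi => by have := hφ i hi; positivity)
    (fun i hi => by have := hφ i hi; positivity) fun i hi => ?_
  calc ⟪p i, z i⟫ ^ 2 ≤ (‖p i‖ * ‖z i‖) ^ 2 := by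
        rw [← sq_abs]; gcongr; exact abs_real_inner_le_norm _ _
    _ = φ i * ‖p i‖ ^ 2 * (‖z i‖ ^ 2 / φ i) := by field_simp [(hφ i hi).ne']

theorem norm_sum_sq_eq_sum_norm_sq {ι : Type*} (s : Finset ι) (f : ι → E)
    (h : ∀ i ∈ s, ∀ j ∈ s, i ≠ j → ⟪f i, f j⟫ = 0) :
    ‖∑ i ∈ s, f i‖ ^ 2 = ∑ i ∈ s, ‖f i‖ ^ 2 := by
  rw [← real_inner_self_eq_norm_sq, sum_inner]
  refine sum_congr rfl fun i hi => ?_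
  rw [inner_sum, sum_eq_single_of_mem i hi fun j hj hji => h i hi j hj hji.symm,
    real_inner_self_eq_norm_sq]

theorem norm_sum_sq_le_of_inner_eq_zero {ι : Type*} (s : Finset ι) (u : ι → E)
    {C : ι → ι → Prop} [DecidableRel C]
    (hC : ∀ i k, C i k → C k i) (hu : ∀ i k, ¬ C i k → ⟪u i, u k⟫ = 0) {w : ι → ι → ℝ}
    (hw : ∀ i k, 0 < w i k) (hwinv : ∀ i k, w i k * w k i = 1) :
    ‖∑ i ∈ s, u i‖ ^ 2 ≤ ∑ i ∈ s, (∑ k ∈ s, if C i k then w i k else 0) * ‖u i‖ ^ 2 := by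
  set A : ι → ι → ℝ := fun i k => if C i k then w i k * ‖u i‖ ^ 2 else 0
  have hpair : ∀ i k, ⟪u i, u k⟫ ≤ (A i k + A k i) / 2 := by
    intro i k
    by_cases hik : C i k
    · have := two_mul_real_inner_le_of_mul_eq_one (u i) (u k) (hw i k) (hwinv i k)
      simp only [A, if_pos hik, if_pos (hC i k hik)]
      linarith
    · have hki : ¬ C k i := fun h => hik (hC k i h)
      simp [A, hik, hki, hu i k hik]
  calc ‖∑ i ∈ s, u i‖ ^ 2 = ∑ i ∈ s, ∑ k ∈ s, ⟪u i, u k⟫ := by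
        rw [← real_inner_self_eq_norm_sq, sum_inner]
        simp only [inner_sum]
    _ ≤ ∑ i ∈ s, ∑ k ∈ s, (A i k + A k i) / 2 := by gcongr with i _ k _; exact hpair i k
    _ = ∑ i ∈ s, ∑ k ∈ s, A i k := by
        simp only [add_div, sum_add_distrib]
        rw [sum_comm (f := fun i k => A k i / 2), ← sum_add_distrib]
        simp only [← sum_add_distrib, add_halves]
    _ = _ := by simp only [A, sum_mul, ite_mul, zero_mul]

theorem inner_apply_self_eq_norm_sq {P : E →L[ℝ] E} (hsa : ∀ u v, ⟪P u, v⟫ = ⟪u, P v⟫)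
    (hidem : P.comp P = P) (u : E) : ⟪P u, u⟫ = ‖P u‖ ^ 2 := by
  rw [← real_inner_self_eq_norm_sq, hsa u (P u), ← P.comp_apply, hidem, real_inner_comm]

theorem inner_sum_smul_apply_self {ι : Type*} (s : Finset ι) (c : ι → ℝ) {P : ι → E →L[ℝ] E}
    (hsa : ∀ i u v, ⟪P i u, v⟫ = ⟪u, P i v⟫) (hidem : ∀ i, (P i).comp (P i) = P i) (u : E) :
    ⟪(∑ i ∈ s, c i • P i) u, u⟫ = ∑ i ∈ s, c i * ‖P i u‖ ^ 2 := by
  simp only [_root_.sum_apply, smul_apply, sum_inner,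
    real_inner_smul_left, inner_apply_self_eq_norm_sq (hsa _) (hidem _)]

theorem inner_apply_apply_eq_zero {P P' : E →L[ℝ] E} (hsa : ∀ u v, ⟪P u, v⟫ = ⟪u, P v⟫)
    (horth : P.comp P' = 0) (u v : E) : ⟪P u, P' v⟫ = 0 := by
  rw [hsa, ← P.comp_apply, horth]
  exact inner_zero_right u

theorem norm_sum_smul_apply_sq {ι : Type*} (s : Finset ι) (a : ι → ℝ) {P : ι → E →L[ℝ] E}
    (hsa : ∀ i u v, ⟪P i u, v⟫ = ⟪u, P i v⟫)
    (horth : ∀ i j, i ≠ j → (P i).comp (P j) = 0) (v : E) :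
    ‖∑ i ∈ s, a i • P i v‖ ^ 2 = ∑ i ∈ s, a i ^ 2 * ‖P i v‖ ^ 2 := by
  rw [norm_sum_sq_eq_sum_norm_sq]
  · simp only [norm_smul, mul_pow, Real.norm_eq_abs, sq_abs]
  · intro i _ j _ hij
    rw [real_inner_smul_left, real_inner_smul_right,
      inner_apply_apply_eq_zero (hsa i) (horth i j hij), mul_zero, mul_zero]

end InnerProduct

section Adjoint

variable {X Y : Type*} [NormedAddCommGroup X] [InnerProductSpace ℝ X] [CompleteSpace X]
  [NormedAddCommGroup Y] [InnerProductSpace ℝ Y] [CompleteSpace Y]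

theorem adjoint_eq_self_of_inner {A : X →L[ℝ] X} (hA : ∀ u v, ⟪A u, v⟫ = ⟪u, A v⟫) : A† = A :=
  ((ContinuousLinearMap.eq_adjoint_iff A A).mpr hA).symm

theorem adjoint_comp_comp_adjoint_comp {A B : Y →L[ℝ] Y} {S : X →L[ℝ] X} (K : X →L[ℝ] Y)
    (hA : ∀ u v, ⟪A u, v⟫ = ⟪u, A v⟫) (hB : ∀ u v, ⟪B u, v⟫ = ⟪u, B v⟫)
    (hS : ∀ u v, ⟪S u, v⟫ = ⟪u, S v⟫) :
    ((A.comp (K.comp S)).comp (K†.comp B))† = (B.comp (K.comp S)).comp (K†.comp A) := by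
  simp only [ContinuousLinearMap.adjoint_comp, ContinuousLinearMap.adjoint_adjoint,
    adjoint_eq_self_of_inner hA, adjoint_eq_self_of_inner hB, adjoint_eq_self_of_inner hS,
    ContinuousLinearMap.comp_assoc]

theorem comp_comp_adjoint_comp_eq_zero_comm {A B : Y →L[ℝ] Y} {S : X →L[ℝ] X} (K : X →L[ℝ] Y)
    (hA : ∀ u v, ⟪A u, v⟫ = ⟪u, A v⟫) (hB : ∀ u v, ⟪B u, v⟫ = ⟪u, B v⟫)
    (hS : ∀ u v, ⟪S u, v⟫ = ⟪u, S v⟫) :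
    (A.comp (K.comp S)).comp (K†.comp B) = 0 ↔ (B.comp (K.comp S)).comp (K†.comp A) = 0 := by
  rw [← adjoint_comp_comp_adjoint_comp K hA hB hS,
    map_eq_zero_iff _ (LinearIsometryEquiv.injective _)]

theorem inner_apply_adjoint_apply {A B : Y →L[ℝ] Y} {S : X →L[ℝ] X} (K : X →L[ℝ] Y)
    (hA : ∀ u v, ⟪A u, v⟫ = ⟪u, A v⟫) (hS : ∀ u v, ⟪S u, v⟫ = ⟪u, S v⟫)
    (hSidem : S.comp S = S) (y : Y) :
    ⟪S ((K†) (A y)), S ((K†) (B y))⟫ = ⟪y, (A.comp (K.comp S)).comp (K†.comp B) y⟫ := by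
  rw [hS, ← S.comp_apply S, hSidem, ContinuousLinearMap.adjoint_inner_left, hA]
  rfl

theorem inner_sum_sum_smul_comp_apply {ι κ : Type*} [Fintype κ] (V : Finset ι)
    {P : κ → X →L[ℝ] X} (hP : ∀ j u v, ⟪P j u, v⟫ = ⟪u, P j v⟫)
    (hPidem : ∀ j, (P j).comp (P j) = P j) {Q : ι → Y →L[ℝ] Y}
    (hQ : ∀ ℓ u v, ⟪Q ℓ u, v⟫ = ⟪u, Q ℓ v⟫) (K : X →L[ℝ] Y) (c : ι → ℝ) (x : X) (y : Y) :
    ⟪(∑ ℓ ∈ V, ∑ j, c ℓ • (Q ℓ).comp (K.comp (P j))) x, y⟫ =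
      ∑ j, ⟪P j x, P j ((K†) (∑ ℓ ∈ V, c ℓ • Q ℓ y))⟫ := by
  have hterm : ∀ ℓ j, ⟪(Q ℓ).comp (K.comp (P j)) x, y⟫ = ⟪P j x, P j ((K†) (Q ℓ y))⟫ := by
    intro ℓ j
    rw [← hP, ← (P j).comp_apply, hPidem, ContinuousLinearMap.adjoint_inner_right, ← hQ]
    rfl
  simp only [_root_.sum_apply, smul_apply, sum_inner, map_sum, map_smul, inner_sum,
    real_inner_smul_left, real_inner_smul_right, hterm]
  exact sum_comm

theorem sum_sq_mul_norm_apply_adjoint_sq_le {ι : Type*} [Fintype ι] {P : ι → X →L[ℝ] X}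
    (hP : ∀ j u v, ⟪P j u, v⟫ = ⟪u, P j v⟫) (hPorth : ∀ j j', j ≠ j' → (P j).comp (P j') = 0)
    {Q : Y →L[ℝ] Y} (hQ : ∀ u v, ⟪Q u, v⟫ = ⟪u, Q v⟫) (hQidem : Q.comp Q = Q)
    (K : X →L[ℝ] Y) (a : ι → ℝ) (y : Y) :
    ∑ j, a j ^ 2 * ‖P j ((K†) (Q y))‖ ^ 2 ≤ ‖∑ j, a j • Q.comp (K.comp (P j))‖ ^ 2 * ‖Q y‖ ^ 2 := by
  set M := ∑ j, a j • Q.comp (K.comp (P j))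
  have hQQ : Q (Q y) = Q y := by rw [← Q.comp_apply, hQidem]
  have hM : (M†) (Q y) = ∑ j, a j • P j ((K†) (Q y)) := by
    simp only [M, map_sum, map_smul, ContinuousLinearMap.adjoint_comp, adjoint_eq_self_of_inner hQ,
      adjoint_eq_self_of_inner (hP _), _root_.sum_apply, smul_apply,
      ContinuousLinearMap.comp_apply, hQQ]
  rw [← norm_sum_smul_apply_sq _ _ hP hPorth, ← hM, ← mul_pow]
  gcongr
  calc ‖(M†) (Q y)‖ ≤ ‖M†‖ * ‖Q y‖ := (M†).le_opNorm _
    _ = ‖M‖ * ‖Q y‖ := by rw [LinearIsometryEquiv.norm_map]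

theorem norm_apply_adjoint_sum_sq_le {ι : Type*} (V : Finset ι) {S : X →L[ℝ] X}
    (hS : ∀ u v, ⟪S u, v⟫ = ⟪u, S v⟫) (hSidem : S.comp S = S) {Q : ι → Y →L[ℝ] Y}
    (hQ : ∀ ℓ u v, ⟪Q ℓ u, v⟫ = ⟪u, Q ℓ v⟫) (K : X →L[ℝ] Y) {w : ι → ι → ℝ}
    (hw : ∀ ℓ k, 0 < w ℓ k) (hwinv : ∀ ℓ k, w ℓ k * w k ℓ = 1) (c : ι → ℝ) (y : Y) :
    ‖S ((K†) (∑ ℓ ∈ V, c ℓ • Q ℓ y))‖ ^ 2 ≤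
      ∑ ℓ ∈ V, (∑ k ∈ V, if ((Q ℓ).comp (K.comp S)).comp (K†.comp (Q k)) ≠ 0
          then w ℓ k else 0) * (c ℓ ^ 2 * ‖S ((K†) (Q ℓ y))‖ ^ 2) := by
  have hsparse := norm_sum_sq_le_of_inner_eq_zero V (fun ℓ => c ℓ • S ((K†) (Q ℓ y)))
    (C := fun ℓ k => ((Q ℓ).comp (K.comp S)).comp (K†.comp (Q k)) ≠ 0)
    (fun ℓ k => not_imp_not.mpr (comp_comp_adjoint_comp_eq_zero_comm K (hQ k) (hQ ℓ) hS).mp)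
    (fun ℓ k hC => by
      rw [real_inner_smul_left, real_inner_smul_right,
        inner_apply_adjoint_apply K (hQ ℓ) hS hSidem, not_not.mp hC]
      simp)
    hw hwinv
  simpa only [map_sum, map_smul, norm_smul, mul_pow, Real.norm_eq_abs, sq_abs] using hsparse

theorem norm_apply_adjoint_sum_sq_le_sum_weight {ι : Type*} [Fintype ι] [DecidableEq ι]
    (V : Finset ι) {S : X →L[ℝ] X} (hS : ∀ u v, ⟪S u, v⟫ = ⟪u, S v⟫) (hSidem : S.comp S = S)
    {Q : ι → Y →L[ℝ] Y} (hQ : ∀ ℓ u v, ⟪Q ℓ u, v⟫ = ⟪u, Q ℓ v⟫) (K : X →L[ℝ] Y)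
    {w : ι → ι → ℝ} (hw : ∀ ℓ k, 0 < w ℓ k) (hwinv : ∀ ℓ k, w ℓ k * w k ℓ = 1) {wt : ι → ℝ}
    (hwt : ∀ ℓ, wt ℓ = if (Q ℓ).comp (K.comp S) ≠ 0 then
      ∑ k, (if ((Q ℓ).comp (K.comp S)).comp (K†.comp (Q k)) ≠ 0 ∧ ℓ ∈ V then w ℓ k else 0)
      else 0)
    (c : ι → ℝ) (y : Y) :
    ‖S ((K†) (∑ ℓ ∈ V, c ℓ • Q ℓ y))‖ ^ 2 ≤
      ∑ ℓ ∈ V, wt ℓ * (c ℓ ^ 2 * ‖S ((K†) (Q ℓ y))‖ ^ 2) := by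
  refine (norm_apply_adjoint_sum_sq_le V hS hSidem hQ K hw hwinv c y).trans ?_
  gcongr with ℓ hℓ
  rw [hwt]
  split_ifs with hB
  · refine (sum_le_sum_of_subset_of_nonneg (subset_univ V) fun k _ _ => ?_).trans_eq ?_
    · split_ifs <;> simp [(hw ℓ k).le]
    · simp only [hℓ, and_true]
  · simp [not_not.mp hB]

end Adjoint

theorem sum_norm_sq_div_le_of_step_condition {X Y : Type*}
    [NormedAddCommGroup X] [InnerProductSpace ℝ X] [CompleteSpace X]
    [NormedAddCommGroup Y] [InnerProductSpace ℝ Y] [CompleteSpace Y] {m n : ℕ}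
    {P : Fin m → X →L[ℝ] X} {Q : Fin n → Y →L[ℝ] Y}
    (hPsa : ∀ j, ∀ u v : X, ⟪P j u, v⟫ = ⟪u, P j v⟫)
    (hPidem : ∀ j, (P j).comp (P j) = P j)
    (hPorth : ∀ j j', j ≠ j' → (P j).comp (P j') = 0)
    (hQsa : ∀ ℓ, ∀ u v : Y, ⟪Q ℓ u, v⟫ = ⟪u, Q ℓ v⟫)
    (hQidem : ∀ ℓ, (Q ℓ).comp (Q ℓ) = Q ℓ)
    (K' : X →L[ℝ] Y) (V : Finset (Fin n))
    {ν : Fin n → ℝ} (hν : ∀ ℓ, 0 < ν ℓ)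
    {φ τ : Fin m → ℝ} (hφ : ∀ j, 0 < φ j) (hτ : ∀ j, 0 < τ j)
    {ψ σ : Fin n → ℝ} (hψ : ∀ ℓ, 0 < ψ ℓ)
    {η η' : ℝ} (hη : 0 < η) (hη' : 0 < η')
    (hcoupleP : ∀ j, φ j * τ j = η')
    (hcoupleD : ∀ ℓ, ν ℓ * ψ ℓ * σ ℓ = η)
    (hω : η / η' ≤ 1)
    {τ0 : Fin m → ℝ} {σ1 : Fin n → ℝ}
    (hτ0 : ∀ j, 0 < τ0 j) (hσ1 : ∀ ℓ, 0 < σ1 ℓ)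
    {w : Fin m → Fin n → Fin n → ℝ}
    (hwpos : ∀ j ℓ k, 0 < w j ℓ k)
    (hwsym : ∀ j ℓ k, w j ℓ k = 1 / w j k ℓ)
    {wtot : Fin m → Fin n → ℝ}
    (hwtot : ∀ j ℓ, wtot j ℓ =
      if (Q ℓ).comp (K'.comp (P j)) ≠ 0 then
        ∑ k : Fin n,
          (if ((Q ℓ).comp (K'.comp (P j))).comp
                ((ContinuousLinearMap.adjoint K').comp (Q k)) ≠ 0 ∧ ℓ ∈ V
            then w j ℓ k else 0)
      else 0)
    {κ : ℝ} (hκ : κ < 1)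
    (hsteps : ∀ (ℓ : Fin n) (j : Fin m), σ ℓ * τ j ≤ σ1 ℓ * τ0 j)
    (hcond : ∀ ℓ, 1 - κ ≥
      ‖∑ j : Fin m, Real.sqrt (wtot j ℓ * σ1 ℓ * τ0 j / ν ℓ) •
          ((Q ℓ).comp (K'.comp (P j)))‖ ^ 2) (y : Y) :
    ∑ j, ‖P j ((K'†) (∑ ℓ ∈ V, (σ ℓ * ψ ℓ) • Q ℓ y))‖ ^ 2 / φ j ≤
      (1 - κ) * ∑ ℓ, ψ ℓ * ‖Q ℓ y‖ ^ 2 := by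
  set g : Fin m → Fin n → X := fun j ℓ => P j ((K'†) (Q ℓ y))
  set a : Fin m → Fin n → ℝ := fun j ℓ => wtot j ℓ * σ1 ℓ * τ0 j / ν ℓ
  have hwtot0 : ∀ j ℓ, 0 ≤ wtot j ℓ := fun j ℓ => by
    rw [hwtot]
    split_ifs
    · exact sum_nonneg fun k _ => by split_ifs <;> simp [(hwpos j ℓ k).le]
    · exact le_rfl
  have ha0 : ∀ j ℓ, 0 ≤ a j ℓ := fun j ℓ =>
    div_nonneg (mul_nonneg (mul_nonneg (hwtot0 j ℓ) (hσ1 ℓ).le) (hτ0 j).le) (hν ℓ).le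
  have hblock : ∀ j, ‖P j ((K'†) (∑ ℓ ∈ V, (σ ℓ * ψ ℓ) • Q ℓ y))‖ ^ 2 ≤
      ∑ ℓ ∈ V, wtot j ℓ * ((σ ℓ * ψ ℓ) ^ 2 * ‖g j ℓ‖ ^ 2) := fun j =>
    norm_apply_adjoint_sum_sq_le_sum_weight V (hPsa j) (hPidem j) hQsa K' (hwpos j)
      (fun ℓ k => by rw [hwsym j ℓ k]; exact one_div_mul_cancel (hwpos j k ℓ).ne') (hwtot j) _ y
  have hlocal : ∀ ℓ, ∑ j, a j ℓ * ‖g j ℓ‖ ^ 2 ≤ (1 - κ) * ‖Q ℓ y‖ ^ 2 := fun ℓ => by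
    have := sum_sq_mul_norm_apply_adjoint_sq_le hPsa hPorth (hQsa ℓ) (hQidem ℓ) K'
      (fun j => Real.sqrt (a j ℓ)) y
    simp only [Real.sq_sqrt (ha0 _ ℓ)] at this
    exact this.trans (by gcongr; exact hcond ℓ)
  have hterm : ∀ j ℓ, wtot j ℓ * ((σ ℓ * ψ ℓ) ^ 2 * ‖g j ℓ‖ ^ 2) / φ j ≤
      ψ ℓ * (a j ℓ * ‖g j ℓ‖ ^ 2) := fun j ℓ => by
    have hwg : 0 ≤ wtot j ℓ * ‖g j ℓ‖ ^ 2 := mul_nonneg (hwtot0 j ℓ) (sq_nonneg _)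
    calc wtot j ℓ * ((σ ℓ * ψ ℓ) ^ 2 * ‖g j ℓ‖ ^ 2) / φ j
        = wtot j ℓ * ‖g j ℓ‖ ^ 2 * ((σ ℓ * ψ ℓ) ^ 2 / φ j) := by ring
      _ ≤ wtot j ℓ * ‖g j ℓ‖ ^ 2 * (ψ ℓ * σ1 ℓ * τ0 j / ν ℓ) :=
        mul_le_mul_of_nonneg_left (sq_mul_div_le_of_coupling (hν ℓ) (hφ j) (hτ j) (hψ ℓ).le
          hη.le hη' (mul_nonneg (hσ1 ℓ).le (hτ0 j).le) (hcoupleD ℓ) (hcoupleP j) hω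
          (hsteps ℓ j)) hwg
      _ = ψ ℓ * (a j ℓ * ‖g j ℓ‖ ^ 2) := by simp only [a]; ring
  calc ∑ j, ‖P j ((K'†) (∑ ℓ ∈ V, (σ ℓ * ψ ℓ) • Q ℓ y))‖ ^ 2 / φ j
      ≤ ∑ j, ∑ ℓ ∈ V, wtot j ℓ * ((σ ℓ * ψ ℓ) ^ 2 * ‖g j ℓ‖ ^ 2) / φ j :=
        sum_le_sum fun j _ => by
          rw [← sum_div]; exact div_le_div_of_nonneg_right (hblock j) (hφ j).le
    _ ≤ ∑ j, ∑ ℓ ∈ V, ψ ℓ * (a j ℓ * ‖g j ℓ‖ ^ 2) := by gcongr with j _ ℓ _; exact hterm j ℓ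
    _ = ∑ ℓ ∈ V, ψ ℓ * ∑ j, a j ℓ * ‖g j ℓ‖ ^ 2 := by rw [sum_comm]; simp only [mul_sum]
    _ ≤ ∑ ℓ ∈ V, ψ ℓ * ((1 - κ) * ‖Q ℓ y‖ ^ 2) := by
        gcongr with ℓ _
        · exact (hψ ℓ).le
        · exact hlocal ℓ
    _ ≤ ∑ ℓ, ψ ℓ * ((1 - κ) * ‖Q ℓ y‖ ^ 2) :=
        sum_le_sum_of_subset_of_nonneg (subset_univ V) fun ℓ _ _ =>
          mul_nonneg (hψ ℓ).le (mul_nonneg (by linarith) (sq_nonneg _))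
    _ = (1 - κ) * ∑ ℓ, ψ ℓ * ‖Q ℓ y‖ ^ 2 := by
        rw [mul_sum]; exact sum_congr rfl fun ℓ _ => by ring

theorem stmt9_general {X Y : Type*}
    [NormedAddCommGroup X] [InnerProductSpace ℝ X] [CompleteSpace X]
    [NormedAddCommGroup Y] [InnerProductSpace ℝ Y] [CompleteSpace Y]
    {m n : ℕ}
    (P : Fin m → X →L[ℝ] X) (Q : Fin n → Y →L[ℝ] Y)
    (hPsa : ∀ j, ∀ u v : X, ⟪P j u, v⟫ = ⟪u, P j v⟫)
    (hPidem : ∀ j, (P j).comp (P j) = P j)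
    (hPorth : ∀ j j', j ≠ j' → (P j).comp (P j') = 0)
    (hQsa : ∀ ℓ, ∀ u v : Y, ⟪Q ℓ u, v⟫ = ⟪u, Q ℓ v⟫)
    (hQidem : ∀ ℓ, (Q ℓ).comp (Q ℓ) = Q ℓ)
    (K' : X →L[ℝ] Y)
    (V : Finset (Fin n))
    (ν : Fin n → ℝ) (hν : ∀ ℓ, 0 < ν ℓ)
    (φ τ : Fin m → ℝ) (hφ : ∀ j, 0 < φ j) (hτ : ∀ j, 0 < τ j)
    (ψ σ : Fin n → ℝ) (hψ : ∀ ℓ, 0 < ψ ℓ)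
    (η η' : ℝ) (hη : 0 < η) (hη' : 0 < η')
    (hcoupleP : ∀ j, φ j * τ j = η')
    (hcoupleD : ∀ ℓ, ν ℓ * ψ ℓ * σ ℓ = η)
    (hω : η / η' ≤ 1)
    (τ0 : Fin m → ℝ) (σ1 : Fin n → ℝ)
    (hτ0 : ∀ j, 0 < τ0 j) (hσ1 : ∀ ℓ, 0 < σ1 ℓ)
    (w : Fin m → Fin n → Fin n → ℝ)
    (hwpos : ∀ j ℓ k, 0 < w j ℓ k)
    (hwsym : ∀ j ℓ k, w j ℓ k = 1 / w j k ℓ)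
    (wtot : Fin m → Fin n → ℝ)
    (hwtot : ∀ j ℓ, wtot j ℓ =
      if (Q ℓ).comp (K'.comp (P j)) ≠ 0 then
        ∑ k : Fin n,
          (if ((Q ℓ).comp (K'.comp (P j))).comp
                ((ContinuousLinearMap.adjoint K').comp (Q k)) ≠ 0 ∧ ℓ ∈ V
            then w j ℓ k else 0)
      else 0)
    (δ κ : ℝ) (hδκ : δ ≤ κ) (hκ : κ < 1)
    (Φ : X →L[ℝ] X) (Ψ : Y →L[ℝ] Y) (Λ : X →L[ℝ] Y)
    (hΦ : Φ = ∑ j : Fin m, φ j • P j)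
    (hΨ : Ψ = ∑ ℓ : Fin n, ψ ℓ • Q ℓ)
    (hΛ : Λ = -∑ ℓ ∈ V, ∑ j : Fin m, (σ ℓ * ψ ℓ) • ((Q ℓ).comp (K'.comp (P j))))
    (hsteps : ∀ (ℓ : Fin n) (j : Fin m), σ ℓ * τ j ≤ σ1 ℓ * τ0 j)
    (hcond : ∀ ℓ, 1 - κ ≥
      ‖∑ j : Fin m, Real.sqrt (wtot j ℓ * σ1 ℓ * τ0 j / ν ℓ) •
          ((Q ℓ).comp (K'.comp (P j)))‖ ^ 2) :
    ∀ (x : X) (y : Y),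
      ⟪Φ x, x⟫ - 2 * ⟪Λ x, y⟫ + ⟪Ψ y, y⟫ ≥
        δ * ⟪Φ x, x⟫ + ((κ - δ) / (1 - δ)) * ⟪Ψ y, y⟫ := by
  intro x y
  set y' := ∑ ℓ ∈ V, (σ ℓ * ψ ℓ) • Q ℓ y
  have hΦx : ⟪Φ x, x⟫ = ∑ j, φ j * ‖P j x‖ ^ 2 := hΦ ▸ inner_sum_smul_apply_self _ φ hPsa hPidem x
  have hΨy : ⟪Ψ y, y⟫ = ∑ ℓ, ψ ℓ * ‖Q ℓ y‖ ^ 2 := hΨ ▸ inner_sum_smul_apply_self _ ψ hQsa hQidem y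
  have hΦ0 : 0 ≤ ⟪Φ x, x⟫ := hΦx ▸ sum_nonneg fun j _ => mul_nonneg (hφ j).le (sq_nonneg _)
  have hΨ0 : 0 ≤ ⟪Ψ y, y⟫ := hΨy ▸ sum_nonneg fun ℓ _ => mul_nonneg (hψ ℓ).le (sq_nonneg _)
  have hΛxy : ⟪Λ x, y⟫ = -∑ j, ⟪P j x, P j ((K'†) y')⟫ := by
    rw [hΛ, neg_apply, inner_neg_left,
      inner_sum_sum_smul_comp_apply V hPsa hPidem hQsa]
  have hdual : ∑ j, ‖P j ((K'†) y')‖ ^ 2 / φ j ≤ (1 - κ) * ⟪Ψ y, y⟫ := hΨy ▸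
    sum_norm_sq_div_le_of_step_condition hPsa hPidem hPorth hQsa hQidem K' V hν hφ hτ hψ hη hη'
      hcoupleP hcoupleD hω hτ0 hσ1 hwpos hwsym hwtot hκ hsteps hcond y
  refine add_sub_two_mul_ge_of_sq_le hΦ0 hΨ0 hδκ hκ ?_
  calc ⟪Λ x, y⟫ ^ 2 = (∑ j, ⟪P j x, P j ((K'†) y')⟫) ^ 2 := by rw [hΛxy, neg_sq]
    _ ≤ ⟪Φ x, x⟫ * ∑ j, ‖P j ((K'†) y')‖ ^ 2 / φ j :=
      hΦx ▸ sq_sum_inner_le_sum_mul_sum _ _ _ fun j _ => hφ j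
    _ ≤ ⟪Φ x, x⟫ * ((1 - κ) * ⟪Ψ y, y⟫) := by gcongr
    _ = (1 - κ) * ⟪Φ x, x⟫ * ⟪Ψ y, y⟫ := by ring

/-- Step-length condition for the full-primal-update method (Lemma 5.1) implies the
lower bound on the local metric. -/
theorem stmt9 {X Y : Type*}
    [NormedAddCommGroup X] [InnerProductSpace ℝ X] [CompleteSpace X]
    [NormedAddCommGroup Y] [InnerProductSpace ℝ Y] [CompleteSpace Y]
    {m n : ℕ}
    (P : Fin m → X →L[ℝ] X) (Q : Fin n → Y →L[ℝ] Y)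
    (hPsa : ∀ j, ∀ u v : X, ⟪P j u, v⟫ = ⟪u, P j v⟫)
    (hPidem : ∀ j, (P j).comp (P j) = P j)
    (hPorth : ∀ j j', j ≠ j' → (P j).comp (P j') = 0)
    (hQsa : ∀ ℓ, ∀ u v : Y, ⟪Q ℓ u, v⟫ = ⟪u, Q ℓ v⟫)
    (hQidem : ∀ ℓ, (Q ℓ).comp (Q ℓ) = Q ℓ)
    (hQorth : ∀ ℓ ℓ', ℓ ≠ ℓ' → (Q ℓ).comp (Q ℓ') = 0)
    (K' : X →L[ℝ] Y)
    (V : Finset (Fin n))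
    (ν : Fin n → ℝ) (hν : ∀ ℓ, 0 < ν ℓ) (hν1 : ∀ ℓ, ν ℓ ≤ 1)
    (φ τ : Fin m → ℝ) (hφ : ∀ j, 0 < φ j) (hτ : ∀ j, 0 < τ j)
    (ψ σ : Fin n → ℝ) (hψ : ∀ ℓ, 0 < ψ ℓ) (hσ : ∀ ℓ, 0 < σ ℓ)
    (η η' : ℝ) (hη : 0 < η) (hη' : 0 < η')
    (hcoupleP : ∀ j, φ j * τ j = η')
    (hcoupleD : ∀ ℓ, ν ℓ * ψ ℓ * σ ℓ = η)
    (hω : η / η' ≤ 1)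
    (τ0 : Fin m → ℝ) (σ1 : Fin n → ℝ)
    (hτ0 : ∀ j, 0 < τ0 j) (hσ1 : ∀ ℓ, 0 < σ1 ℓ)
    (w : Fin m → Fin n → Fin n → ℝ)
    (hwpos : ∀ j ℓ k, 0 < w j ℓ k)
    (hwsym : ∀ j ℓ k, w j ℓ k = 1 / w j k ℓ)
    (wtot : Fin m → Fin n → ℝ)
    (hwtot : ∀ j ℓ, wtot j ℓ =
      if (Q ℓ).comp (K'.comp (P j)) ≠ 0 then
        ∑ k : Fin n,
          (if ((Q ℓ).comp (K'.comp (P j))).comp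
                ((ContinuousLinearMap.adjoint K').comp (Q k)) ≠ 0 ∧ ℓ ∈ V
            then w j ℓ k else 0)
      else 0)
    (δ κ : ℝ) (hδ : 0 ≤ δ) (hδκ : δ ≤ κ) (hκ : κ < 1)
    (Φ : X →L[ℝ] X) (Ψ : Y →L[ℝ] Y) (Λ : X →L[ℝ] Y)
    (hΦ : Φ = ∑ j : Fin m, φ j • P j)
    (hΨ : Ψ = ∑ ℓ : Fin n, ψ ℓ • Q ℓ)
    (hΛ : Λ = -∑ ℓ ∈ V, ∑ j : Fin m, (σ ℓ * ψ ℓ) • ((Q ℓ).comp (K'.comp (P j))))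
    (hsteps : ∀ (ℓ : Fin n) (j : Fin m), σ ℓ * τ j ≤ σ1 ℓ * τ0 j)
    (hcond : ∀ ℓ, 1 - κ ≥
      ‖∑ j : Fin m, Real.sqrt (wtot j ℓ * σ1 ℓ * τ0 j / ν ℓ) •
          ((Q ℓ).comp (K'.comp (P j)))‖ ^ 2) :
    ∀ (x : X) (y : Y),
      ⟪Φ x, x⟫ - 2 * ⟪Λ x, y⟫ + ⟪Ψ y, y⟫ ≥
        δ * ⟪Φ x, x⟫ + ((κ - δ) / (1 - δ)) * ⟪Ψ y, y⟫ :=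
  stmt9_general P Q hPsa hPidem hPorth hQsa hQidem K' V ν hν φ τ hφ hτ ψ σ hψ η η' hη hη' hcoupleP
    hcoupleD hω τ0 σ1 hτ0 hσ1 w hwpos hwsym wtot hwtot δ κ hδκ hκ Φ Ψ Λ hΦ hΨ hΛ hsteps hcond
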